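/- Let A be an m×n matrix over a commutative ring with unity with m ≤ n, and let (H_1, H_2, …, H_s) be a fixed ordered partition of {1,…,m}. Then per(A) = Σ over all tuples (K_1, K_2, …, K_s) of pairwise disjoint subsets of {1,…,n} with |K_i| = |H_i| for 1 ≤ i ≤ s, of Π_{i=1}^{s} per(A[H_i | K_i]). -/
import Mathlib


open scoped BigOperators Classical

/-- The permanent of a rectangular matrix: the sum over all injections of the
row index set into the column index set of the corresponding products. -/
noncomputable def rectPer {R : Type*} [CommRing R] {ι κ : Type*} [Fintype ι] [Fintype κ]
    (A : Matrix ι κ R) : R :=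
  ∑ σ : ι ↪ κ, ∏ i, A i (σ i)

theorem stmt3 {R : Type*} [CommRing R] (m n s : ℕ) (hmn : m ≤ n)
    (A : Matrix (Fin m) (Fin n) R) (H : Fin s → Finset (Fin m))
    (hdisj : ∀ i j, i ≠ j → Disjoint (H i) (H j))
    (hcover : ∀ x : Fin m, ∃ i, x ∈ H i) :
    rectPer A =
      ∑ K : Fin s → Finset (Fin n),
        if (∀ i, (K i).card = (H i).card) ∧ (∀ i j, i ≠ j → Disjoint (K i) (K j)) then
          ∏ i, rectPer (A.submatrix (fun a : {x // x ∈ H i} => a.1)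
            (fun b : {x // x ∈ K i} => b.1))
        else 0 := by
  classical
  choose idx hidx using hcover
  have huniq : ∀ {x : Fin m} {i : Fin s}, x ∈ H i → idx x = i := by
    intro x i hi
    by_contra h
    exact Finset.disjoint_left.mp (hdisj _ _ h) (hidx x) hi
  let F : (Fin m ↪ Fin n) → (Fin s → Finset (Fin n)) := fun σ i => (H i).image σ
  have hPF : ∀ σ : Fin m ↪ Fin n,
      (∀ i, ((F σ) i).card = (H i).card) ∧ (∀ i j, i ≠ j → Disjoint (F σ i) (F σ j)) := by
    intro σ
    constructor
    · intro i; exact Finset.card_image_of_injective _ σ.injective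
    · intro i j hij
      exact (Finset.disjoint_image σ.injective).mpr (hdisj i j hij)
  have hcup : Finset.univ.biUnion H = (Finset.univ : Finset (Fin m)) := by
    ext x
    simp only [Finset.mem_biUnion, Finset.mem_univ, true_and, iff_true]
    exact ⟨idx x, hidx x⟩
  have hprod : ∀ g : Fin m → R, ∏ a, g a = ∏ i, ∏ a ∈ H i, g a := by
    intro g
    rw [← hcup, Finset.prod_biUnion]
    intro i _ j _ hij
    exact hdisj i j hij
  have key := Finset.sum_fiberwise (Finset.univ : Finset (Fin m ↪ Fin n)) F
    (fun σ => ∏ a, A a (σ a))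
  rw [rectPer, ← key]
  refine Finset.sum_congr rfl fun K _ => ?_
  split_ifs with hK
  · -- valid K
    have congrT : ∀ (τ : ∀ i, ({x // x ∈ H i} ↪ {x // x ∈ K i})) {i j : Fin s}
        (h : i = j) (a : {z // z ∈ H i}) (ha : a.1 ∈ H j),
        (τ i a).1 = (τ j ⟨a.1, ha⟩).1 := by
      intro τ i j h a ha
      cases h
      rfl
    have hexp : (∏ i, rectPer (A.submatrix (fun a : {x // x ∈ H i} => a.1)
        (fun b : {x // x ∈ K i} => b.1)))
        = ∑ τ : ∀ i, ({x // x ∈ H i} ↪ {x // x ∈ K i}),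
            ∏ i, ∏ a : {x // x ∈ H i}, A a.1 (τ i a).1 := by
      simp only [rectPer]
      exact Fintype.prod_sum _
    rw [hexp]
    -- the backward map
    have binj : ∀ (τ : ∀ i, ({x // x ∈ H i} ↪ {x // x ∈ K i})),
        Function.Injective (fun x : Fin m => (τ (idx x) ⟨x, hidx x⟩).1) := by
      intro τ x y hxy
      have hxy' : (τ (idx x) ⟨x, hidx x⟩).1 = (τ (idx y) ⟨y, hidx y⟩).1 := hxy
      have hij : idx x = idx y := by
        by_contra hij
        refine Finset.disjoint_left.mp (hK.2 _ _ hij) (τ (idx x) ⟨x, hidx x⟩).2 ?_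
        rw [hxy']
        exact (τ (idx y) ⟨y, hidx y⟩).2
      have hx' : x ∈ H (idx y) := hij ▸ hidx x
      have heq : (τ (idx y) ⟨x, hx'⟩).1 = (τ (idx y) ⟨y, hidx y⟩).1 := by
        rw [← congrT τ hij ⟨x, hidx x⟩ hx']
        exact hxy'
      have := (τ (idx y)).injective (Subtype.ext heq)
      exact congrArg Subtype.val this
    refine Finset.sum_bij'
      (fun σ hσ => fun i : Fin s =>
        ⟨fun a : {x // x ∈ H i} =>
          (⟨σ a.1, by
            have h : F σ = K := (Finset.mem_filter.mp hσ).2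
            rw [← congrFun h i]
            exact Finset.mem_image_of_mem σ a.2⟩ : {x // x ∈ K i}),
         fun a b hab => Subtype.ext (σ.injective (congrArg Subtype.val hab))⟩)
      (fun τ _ => ⟨fun x => (τ (idx x) ⟨x, hidx x⟩).1, binj τ⟩)
      ?_ ?_ ?_ ?_ ?_
    · intro σ hσ; exact Finset.mem_univ _
    · -- membership of the backward map in the fiber
      intro τ _
      rw [Finset.mem_filter]
      refine ⟨Finset.mem_univ _, ?_⟩
      funext i
      have hsub : (H i).image (fun x : Fin m => (τ (idx x) ⟨x, hidx x⟩).1) ⊆ K i := by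
        intro y hy
        rw [Finset.mem_image] at hy
        obtain ⟨x, hx, rfl⟩ := hy
        rw [congrT τ (huniq hx) ⟨x, hidx x⟩ hx]
        exact (τ i ⟨x, hx⟩).2
      refine Finset.eq_of_subset_of_card_le hsub ?_
      show (K i).card ≤ ((H i).image (fun x : Fin m => ((τ (idx x)) ⟨x, hidx x⟩).1)).card
      have : ((H i).image (fun x : Fin m => (τ (idx x) ⟨x, hidx x⟩).1)).card = (H i).card :=
        Finset.card_image_of_injective _ (binj τ)
      rw [this, hK.1 i]
    · -- left inverse
      intro σ hσ
      ext x
      rfl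
    · -- right inverse
      intro τ _
      funext i
      ext a
      obtain ⟨x, hx⟩ := a
      have h : idx x = i := huniq hx
      exact congrArg Fin.val (congrT τ h ⟨x, hidx x⟩ hx)
    · -- summand equality
      intro σ hσ
      rw [hprod (fun a => A a (σ a))]
      refine Finset.prod_congr rfl fun i _ => ?_
      exact (Finset.prod_coe_sort (H i) (fun a => A a (σ a))).symm
  · -- invalid K : empty fiber
    refine Finset.sum_eq_zero fun σ hσ => ?_
    exfalso
    exact hK ((Finset.mem_filter.mp hσ).2 ▸ hPF σ)
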